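/- arXiv:1906.06365 — 3 statements merged into one kernel-verified Lean document; each statement's English description precedes it below -/
import Mathlib

section
/- Let S and Y be measurable spaces (with the diagonal of Y × Y measurable), μ a probability measure on S × Y, and let Λ₁, …, Λ_k ⊆ S be pairwise disjoint measurable sets with Λ₀ = S \ (Λ₁ ∪ ⋯ ∪ Λ_k). Let H₀, H₁, …, H_k be nonempty classes of measurable predictors h : S → Y, and let H be a class of measurable predictors closed under gluing along this partition, i.e. for every choice h_i ∈ H_i (i = 0, …, k) the predictor defined by h(s) = h_i(s) for s ∈ Λ_i belongs to H. Then L*(H) ≤ ∑_{i=0}^{k} μ(Λ_i × Y) · L*_{Λ_i}(H_i), with terms of measure-zero regions taken to be zero. In particular, bounding the conditional risk on any region by 1 yields the region-wise upper bound on the approximation error used in the error-decomposition theorem. -/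
open MeasureTheory

/-- The 0/1 risk of a predictor `h : S → Y` under a measure `μ` on `S × Y`. -/
noncomputable def risk {S Y : Type*} [MeasurableSpace S] [MeasurableSpace Y]
    (μ : Measure (S × Y)) (h : S → Y) : ENNReal :=
  μ {p : S × Y | h p.1 ≠ p.2}

/-- The conditional 0/1 risk of `h` on the region `A ⊆ S`. -/
noncomputable def condRisk {S Y : Type*} [MeasurableSpace S] [MeasurableSpace Y]
    (μ : Measure (S × Y)) (A : Set S) (h : S → Y) : ENNReal :=
  μ ({p : S × Y | h p.1 ≠ p.2} ∩ (A ×ˢ (Set.univ : Set Y))) /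
    μ (A ×ˢ (Set.univ : Set Y))

/-!
For any choice of `hᵢ ∈ Hᵢ` the predictor glued from them lies in `H`; its error set splits
along the partition into the error sets of the `hᵢ` on their regions, of masses
`μ(Λᵢ × Y) · L_{Λᵢ}(hᵢ)`, so `L*(H)` is at most this sum. As the `hᵢ` are chosen independently,
the infimum of the sum over all choices is the sum of the infima: of two choices, the one taking
the better `hᵢ` in each region beats both.
-/

open Set

namespace ENNReal

theorem sum_mul_iInf_eq_iInf_pi {ι : Type*} [Fintype ι] {α : ι → Type*} [∀ i, Nonempty (α i)]
    (c : ι → ℝ≥0∞) (hc : ∀ i, c i ≠ ∞) (f : ∀ i, α i → ℝ≥0∞) :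
    ∑ i, c i * ⨅ a, f i a = ⨅ σ : (∀ i, α i), ∑ i, c i * f i (σ i) := by
  classical
  rw [ENNReal.iInf_sum]
  · refine Finset.sum_congr rfl fun i _ => ?_
    rw [ENNReal.mul_iInf fun h => absurd h (hc i)]
    exact ((Function.surjective_eval i).iInf_comp fun a => c i * f i a).symm
  · intro _ σ τ
    refine ⟨fun i => if f i (σ i) ≤ f i (τ i) then σ i else τ i, fun i _ => ?_⟩
    dsimp only
    split_ifs with h
    · exact ⟨le_rfl, by gcongr⟩
    · exact ⟨by gcongr; exact (not_le.mp h).le, le_rfl⟩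

end ENNReal

theorem exists_eqOn_of_pairwise_disjoint {ι S Y : Type*} {R : ι → Set S}
    (hR : Pairwise (Function.onFun Disjoint R)) (hcover : ⋃ i, R i = univ) (h : ι → S → Y) :
    ∃ g : S → Y, ∀ i, EqOn g (h i) (R i) := by
  have hmem : ∀ s, ∃ i, s ∈ R i := fun s => mem_iUnion.mp (hcover ▸ mem_univ s)
  choose idx hidx using hmem
  refine ⟨fun s => h (idx s) s, fun i s hs => ?_⟩
  simp only [hR.eq (not_disjoint_iff.mpr ⟨s, hidx s, hs⟩)]

section Risk

variable {S Y : Type*} [MeasurableSpace S] [MeasurableSpace Y] (μ : Measure (S × Y))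

theorem measure_inter_le_mul_condRisk [IsFiniteMeasure μ] (A : Set S) (h : S → Y) :
    μ ({p : S × Y | h p.1 ≠ p.2} ∩ A ×ˢ univ) ≤ μ (A ×ˢ univ) * condRisk μ A h := by
  rcases eq_or_ne (μ (A ×ˢ univ)) 0 with hA | hA
  · exact (measure_mono inter_subset_right).trans (hA ▸ zero_le)
  · rw [condRisk, ENNReal.mul_div_cancel hA (measure_ne_top μ _)]

theorem risk_le_sum_mul_condRisk [IsFiniteMeasure μ] {ι : Type*} [Fintype ι] {R : ι → Set S}
    (hcover : ⋃ i, R i = univ) {g : S → Y} {h : ι → S → Y} (hg : ∀ i, EqOn g (h i) (R i)) :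
    risk μ g ≤ ∑ i, μ (R i ×ˢ univ) * condRisk μ (R i) (h i) := by
  have herr : {p : S × Y | g p.1 ≠ p.2} = ⋃ i, {p : S × Y | h i p.1 ≠ p.2} ∩ R i ×ˢ univ := by
    ext ⟨s, y⟩
    obtain ⟨i, hi⟩ := mem_iUnion.mp (hcover ▸ mem_univ s)
    simp only [mem_ofPred_eq, mem_iUnion, mem_inter_iff, mem_prod, mem_univ, and_true]
    exact ⟨fun hne => ⟨i, hg i hi ▸ hne, hi⟩, fun ⟨j, hne, hj⟩ => hg j hj ▸ hne⟩
  rw [risk, herr]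
  exact (measure_iUnion_fintype_le μ _).trans
    (Finset.sum_le_sum fun i _ => measure_inter_le_mul_condRisk μ (R i) (h i))

theorem iInf_risk_le_sum_mul_iInf_condRisk [IsFiniteMeasure μ] {ι : Type*} [Fintype ι]
    {R : ι → Set S} (hR : Pairwise (Function.onFun Disjoint R)) (hcover : ⋃ i, R i = univ)
    (Hs : ι → Set (S → Y)) (hHs : ∀ i, (Hs i).Nonempty) (H : Set (S → Y))
    (hglue : ∀ h : ι → S → Y, (∀ i, h i ∈ Hs i) → ∀ g, (∀ i, EqOn g (h i) (R i)) → g ∈ H) :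
    ⨅ g ∈ H, risk μ g ≤ ∑ i, μ (R i ×ˢ univ) * ⨅ h ∈ Hs i, condRisk μ (R i) h := by
  have := fun i => (hHs i).to_subtype
  simp only [iInf_subtype']
  rw [ENNReal.sum_mul_iInf_eq_iInf_pi _ fun i => measure_ne_top μ _]
  refine le_iInf fun σ => ?_
  obtain ⟨g, hg⟩ := exists_eqOn_of_pairwise_disjoint hR hcover fun i => (σ i : S → Y)
  exact (iInf_le (fun g : H => risk μ g) ⟨g, hglue _ (fun i => (σ i).2) g hg⟩).trans
    (risk_le_sum_mul_condRisk μ hcover hg)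

end Risk

theorem stmt3_general {S Y : Type*} [MeasurableSpace S] [MeasurableSpace Y]
    (μ : Measure (S × Y)) [IsProbabilityMeasure μ]
    (k : ℕ) (Λ : Fin k → Set S)
    (hdisj : Pairwise (Function.onFun Disjoint Λ))
    (Λ₀ : Set S) (hΛ₀ : Λ₀ = (⋃ i, Λ i)ᶜ)
    (H₀ : Set (S → Y)) (Hs : Fin k → Set (S → Y)) (H : Set (S → Y))
    (hH₀ne : H₀.Nonempty) (hHsne : ∀ i, (Hs i).Nonempty)
    (hglue : ∀ (h₀ : S → Y) (hh : Fin k → S → Y),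
      h₀ ∈ H₀ → (∀ i, hh i ∈ Hs i) →
      ∀ g : S → Y, (∀ i, ∀ s ∈ Λ i, g s = hh i s) → (∀ s ∈ Λ₀, g s = h₀ s) → g ∈ H) :
    (⨅ h ∈ H, risk μ h) ≤
      μ (Λ₀ ×ˢ (Set.univ : Set Y)) * (⨅ h ∈ H₀, condRisk μ Λ₀ h) +
      ∑ i : Fin k, μ (Λ i ×ˢ (Set.univ : Set Y)) * (⨅ h ∈ Hs i, condRisk μ (Λ i) h) := by
  have hdisj' : Pairwise (Function.onFun Disjoint fun o : Option (Fin k) => o.elim Λ₀ Λ) := by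
    have hΛ₀Λ : ∀ i, Disjoint Λ₀ (Λ i) := fun i =>
      hΛ₀ ▸ disjoint_compl_left.mono_right (subset_iUnion Λ i)
    rintro (_ | i) (_ | j) hij
    exacts [absurd rfl hij, hΛ₀Λ j, (hΛ₀Λ i).symm, hdisj (mt (congrArg some) hij)]
  have hcover : ⋃ o : Option (Fin k), o.elim Λ₀ Λ = univ := by
    rw [iUnion_option, hΛ₀]
    exact compl_union_self _
  have hbound := iInf_risk_le_sum_mul_iInf_condRisk μ hdisj' hcover (fun o => o.elim H₀ Hs)
    (fun o => o.rec hH₀ne hHsne) H fun h hh g hg => hglue _ _ (hh none) (fun i => hh (some i)) g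
      (fun i _ hs => hg (some i) hs) (fun _ hs => hg none hs)
  rwa [Fintype.sum_option] at hbound

/-- decomposition of the minimal risk over a finite measurable partition
`Λ₀, Λ₁, …, Λ_k` of `S`, for a class `H` closed under gluing along the partition.
(In `ℝ≥0∞`, a term with measure-zero region vanishes since `0 * x = 0`.) -/
theorem stmt3 {S Y : Type*} [MeasurableSpace S] [MeasurableSpace Y]
    (hdiag : MeasurableSet {p : Y × Y | p.1 = p.2})
    (μ : Measure (S × Y)) [IsProbabilityMeasure μ]
    (k : ℕ) (Λ : Fin k → Set S) (hΛm : ∀ i, MeasurableSet (Λ i))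
    (hdisj : Pairwise (Function.onFun Disjoint Λ))
    (Λ₀ : Set S) (hΛ₀ : Λ₀ = (⋃ i, Λ i)ᶜ)
    (H₀ : Set (S → Y)) (Hs : Fin k → Set (S → Y)) (H : Set (S → Y))
    (hH₀ne : H₀.Nonempty) (hHsne : ∀ i, (Hs i).Nonempty)
    (hH₀m : ∀ h ∈ H₀, Measurable h) (hHsm : ∀ i, ∀ h ∈ Hs i, Measurable h)
    (hHm : ∀ h ∈ H, Measurable h)
    (hglue : ∀ (h₀ : S → Y) (hh : Fin k → S → Y),
      h₀ ∈ H₀ → (∀ i, hh i ∈ Hs i) →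
      ∀ g : S → Y, (∀ i, ∀ s ∈ Λ i, g s = hh i s) → (∀ s ∈ Λ₀, g s = h₀ s) → g ∈ H) :
    (⨅ h ∈ H, risk μ h) ≤
      μ (Λ₀ ×ˢ (Set.univ : Set Y)) * (⨅ h ∈ H₀, condRisk μ Λ₀ h) +
      ∑ i : Fin k, μ (Λ i ×ˢ (Set.univ : Set Y)) * (⨅ h ∈ Hs i, condRisk μ (Λ i) h) :=
  stmt3_general μ k Λ hdisj Λ₀ hΛ₀ H₀ Hs H hH₀ne hHsne hglue
end

section
/- Let p, q, r ∈ ℝ² satisfy min(p₁, q₁) > r₁ and p₂ > q₂ (the first coordinate separates {p, q} from r, and the second coordinate separates p from q). Then for every target vector (t₁, t₂, t₃) ∈ ℝ³ and every ε > 0 there exists a two-hidden-layer logistic network N : ℝ² → ℝ such that |N(p) − t₁| < ε, |N(q) − t₂| < ε, and |N(r) − t₃| < ε. (Given two score values that separate a triple of items appropriately, a small logistic network can implement any triple basis to arbitrary precision.) -/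
/-- The logistic sigmoid `σ(t) = 1 / (1 + exp (−t))`. -/
noncomputable def sigmoid (t : ℝ) : ℝ := 1 / (1 + Real.exp (-t))

/-- A fully connected network `ℝ² → ℝ` with two hidden layers of two logistic units each
and a linear output unit. -/
noncomputable def twoLayerNet (a₁ a₂ a₃ a₄ : ℝ × ℝ) (β₁ β₂ β₃ β₄ c₀ c₁ c₂ : ℝ)
    (z : ℝ × ℝ) : ℝ :=
  let h₁ := sigmoid (a₁.1 * z.1 + a₁.2 * z.2 + β₁)
  let h₂ := sigmoid (a₂.1 * z.1 + a₂.2 * z.2 + β₂)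
  c₁ * sigmoid (a₃.1 * h₁ + a₃.2 * h₂ + β₃) +
    c₂ * sigmoid (a₄.1 * h₁ + a₄.2 * h₂ + β₄) + c₀

/-!
Steep logistic units act as threshold gates. Let `θ₁` separate `r.1` from `p.1, q.1` and `θ₂`
separate `q.2` from `p.2`. With weights of size `s`, the first layer approximates the indicators
`h₁ = [z.1 > θ₁]` and `h₂ = [z.2 > θ₂]`, and the second layer approximates `h₁ ∧ h₂` and `h₁`.
These two indicators take the values `(1, 1)`, `(0, 1)`, `(0, 0)` at `p`, `q`, `r`, so the output
`c₁ [h₁ ∧ h₂] + c₂ h₁ + c₀` tends to `(c₁ + c₂ + c₀, c₂ + c₀, c₀)`, which is any prescribed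
triple for a suitable choice of the `cᵢ`.
-/

open Filter Topology

theorem sigmoid_eq_real_sigmoid : sigmoid = Real.sigmoid := by
  funext t
  simp [sigmoid, Real.sigmoid_def]

section SteepSigmoid

variable {f : ℝ → ℝ} {c : ℝ}

theorem tendsto_sigmoid_mul_of_pos (hf : Tendsto f atTop (𝓝 c)) (hc : 0 < c) :
    Tendsto (fun s ↦ Real.sigmoid (s * f s)) atTop (𝓝 1) :=
  Real.tendsto_sigmoid_atTop.comp (tendsto_id.atTop_mul_pos hc hf)

theorem tendsto_sigmoid_mul_of_neg (hf : Tendsto f atTop (𝓝 c)) (hc : c < 0) :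
    Tendsto (fun s ↦ Real.sigmoid (s * f s)) atTop (𝓝 0) :=
  Real.tendsto_sigmoid_atBot.comp (tendsto_id.atTop_mul_neg hc hf)

end SteepSigmoid

/-- The network computing approximately `c₁ [z.1 > θ₁ ∧ z.2 > θ₂] + c₂ [z.1 > θ₁] + c₀`,
with steepness `s`. -/
noncomputable def stepNet (θ₁ θ₂ c₀ c₁ c₂ s : ℝ) : ℝ × ℝ → ℝ :=
  twoLayerNet (s, 0) (0, s) (s, s) (s, 0) (-(s * θ₁)) (-(s * θ₂)) (-(3 * s / 2)) (-(s / 2))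
    c₀ c₁ c₂

namespace stepNet

variable {θ₁ θ₂ c₀ c₁ c₂ : ℝ} {z : ℝ × ℝ}

theorem apply (s : ℝ) : stepNet θ₁ θ₂ c₀ c₁ c₂ s z =
    c₁ * Real.sigmoid (s * (Real.sigmoid (s * (z.1 - θ₁)) +
      Real.sigmoid (s * (z.2 - θ₂)) - 3 / 2)) +
    c₂ * Real.sigmoid (s * (Real.sigmoid (s * (z.1 - θ₁)) - 1 / 2)) + c₀ := by
  simp only [stepNet, twoLayerNet, sigmoid_eq_real_sigmoid]
  ring_nf

theorem tendsto_of_lt_of_lt (h₁ : θ₁ < z.1) (h₂ : θ₂ < z.2) :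
    Tendsto (fun s ↦ stepNet θ₁ θ₂ c₀ c₁ c₂ s z) atTop (𝓝 (c₁ + c₂ + c₀)) := by
  have H₁ := tendsto_sigmoid_mul_of_pos tendsto_const_nhds (sub_pos.2 h₁)
  have H₂ := tendsto_sigmoid_mul_of_pos tendsto_const_nhds (sub_pos.2 h₂)
  have hand := tendsto_sigmoid_mul_of_pos ((H₁.add H₂).sub_const (3 / 2)) (by norm_num)
  have hfst := tendsto_sigmoid_mul_of_pos (H₁.sub_const (1 / 2)) (by norm_num)
  simpa only [apply, mul_one] using ((hand.const_mul c₁).add (hfst.const_mul c₂)).add_const c₀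

theorem tendsto_of_lt_of_gt (h₁ : θ₁ < z.1) (h₂ : z.2 < θ₂) :
    Tendsto (fun s ↦ stepNet θ₁ θ₂ c₀ c₁ c₂ s z) atTop (𝓝 (c₂ + c₀)) := by
  have H₁ := tendsto_sigmoid_mul_of_pos tendsto_const_nhds (sub_pos.2 h₁)
  have H₂ := tendsto_sigmoid_mul_of_neg tendsto_const_nhds (sub_neg.2 h₂)
  have hand := tendsto_sigmoid_mul_of_neg ((H₁.add H₂).sub_const (3 / 2)) (by norm_num)
  have hfst := tendsto_sigmoid_mul_of_pos (H₁.sub_const (1 / 2)) (by norm_num)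
  simpa only [apply, mul_zero, mul_one, zero_add] using
    ((hand.const_mul c₁).add (hfst.const_mul c₂)).add_const c₀

theorem tendsto_of_gt (h₁ : z.1 < θ₁) :
    Tendsto (fun s ↦ stepNet θ₁ θ₂ c₀ c₁ c₂ s z) atTop (𝓝 c₀) := by
  have H₁ := tendsto_sigmoid_mul_of_neg tendsto_const_nhds (sub_neg.2 h₁)
  have hfst := tendsto_sigmoid_mul_of_neg (H₁.sub_const (1 / 2)) (by norm_num)
  -- `z.2` may lie on the threshold `θ₂`, so the AND unit is squeezed below the first one instead.
  have hand : Tendsto (fun s ↦ Real.sigmoid (s * (Real.sigmoid (s * (z.1 - θ₁)) +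
      Real.sigmoid (s * (z.2 - θ₂)) - 3 / 2))) atTop (𝓝 0) := by
    refine tendsto_of_tendsto_of_tendsto_of_le_of_le' tendsto_const_nhds hfst
      (.of_forall fun s ↦ Real.sigmoid_nonneg _) ?_
    filter_upwards [eventually_ge_atTop 0] with s hs
    refine Real.sigmoid_le (mul_le_mul_of_nonneg_left ?_ hs)
    linarith [Real.sigmoid_le_one (s * (z.2 - θ₂))]
  simpa only [apply, mul_zero, zero_add] using
    ((hand.const_mul c₁).add (hfst.const_mul c₂)).add_const c₀

end stepNet

/-- given two score coordinates separating the triple `(p, q, r)`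
appropriately, a two-hidden-layer logistic network can hit any target values on the three
points to arbitrary precision (neural implementation of a triple basis). -/
theorem stmt9 (p q r : ℝ × ℝ) (h1 : r.1 < min p.1 q.1) (h2 : q.2 < p.2) :
    ∀ t₁ t₂ t₃ : ℝ, ∀ ε > (0 : ℝ),
      ∃ a₁ a₂ a₃ a₄ : ℝ × ℝ, ∃ β₁ β₂ β₃ β₄ c₀ c₁ c₂ : ℝ,
        |twoLayerNet a₁ a₂ a₃ a₄ β₁ β₂ β₃ β₄ c₀ c₁ c₂ p - t₁| < ε ∧
        |twoLayerNet a₁ a₂ a₃ a₄ β₁ β₂ β₃ β₄ c₀ c₁ c₂ q - t₂| < ε ∧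
        |twoLayerNet a₁ a₂ a₃ a₄ β₁ β₂ β₃ β₄ c₀ c₁ c₂ r - t₃| < ε := by
  intro t₁ t₂ t₃ ε hε
  obtain ⟨θ₁, hr₁, hpq₁⟩ := exists_between h1
  obtain ⟨hp₁, hq₁⟩ := lt_min_iff.mp hpq₁
  obtain ⟨θ₂, hq₂, hp₂⟩ := exists_between h2
  set net := stepNet θ₁ θ₂ t₃ (t₁ - t₂) (t₂ - t₃)
  have hp : Tendsto (fun s ↦ net s p) atTop (𝓝 t₁) := by
    convert stepNet.tendsto_of_lt_of_lt hp₁ hp₂ using 2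
    ring
  have hq : Tendsto (fun s ↦ net s q) atTop (𝓝 t₂) := by
    convert stepNet.tendsto_of_lt_of_gt hq₁ hq₂ using 2
    ring
  have hr : Tendsto (fun s ↦ net s r) atTop (𝓝 t₃) := stepNet.tendsto_of_gt hr₁
  obtain ⟨s, hs⟩ := ((Metric.tendsto_nhds.mp hp ε hε).and
    ((Metric.tendsto_nhds.mp hq ε hε).and (Metric.tendsto_nhds.mp hr ε hε))).exists
  simp only [Real.dist_eq] at hs
  exact ⟨_, _, _, _, _, _, _, _, _, _, _, hs⟩
end

section
/- The set-dependent-embeddings aggregation model with a reference point can violate IIA: there exist d, ℓ ∈ ℕ, a linear map f : ℝ^d → ℝ^ℓ, a Lipschitz, strictly increasing, piecewise-linear nonlinearity μ : ℝ → ℝ, and finite sets s' ⊂ s ⊂ ℝ^d such that, taking the reference point r(t) ∈ ℝ^ℓ to be the coordinatewise mean of f over t and writing g(x, t) = ∑_{i=1}^{ℓ} μ( f_i(x) − r_i(t) ), the function g(·, s) has a unique maximizer y over s, the function g(·, s') has a unique maximizer y' over s', y ∈ s', and y' ≠ y. Hence passing item scores through an asymmetric nonlinearity relative to a set-dependent reference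 point allows the induced choice function to violate IIA (Definition 2). -/
/-!
Take the loss-averse nonlinearity `μ t = min t (t / 2)`: shortfalls from the reference point
count in full, gains only at half weight. Among `a = (4, 0)` and `b = (0, 5)` each item is ahead
of the mean `(2, 5/2)` on one attribute and behind on the other; `b` falls short by less, so `b`
wins. Adding the decoy `c = (0, -10)` drags the reference on the second attribute down to `-5/3`,
which turns `a`'s shortfall there into a gain, and now `a` wins.
-/

/-- A function `ℝ → ℝ` is piecewise linear if, outside a finite set of breakpoints,
it is locally affine. -/
def IsPiecewiseLinear (mu : ℝ → ℝ) : Prop :=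
  ∃ B : Finset ℝ, ∀ x : ℝ, x ∉ B → ∃ a b ε : ℝ, 0 < ε ∧
    ∀ y ∈ Set.Ioo (x - ε) (x + ε), mu y = a * y + b

theorem isPiecewiseLinear_of_affine_on_sides {mu : ℝ → ℝ} {c a₁ b₁ a₂ b₂ : ℝ}
    (h_lt : ∀ t < c, mu t = a₁ * t + b₁) (h_gt : ∀ t > c, mu t = a₂ * t + b₂) :
    IsPiecewiseLinear mu := by
  refine ⟨{c}, fun x hx => ?_⟩
  rcases lt_or_gt_of_ne (Finset.notMem_singleton.mp hx) with hxc | hxc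
  · exact ⟨a₁, b₁, c - x, by linarith, fun y hy => h_lt y (by linarith [hy.2])⟩
  · exact ⟨a₂, b₂, x - c, by linarith, fun y hy => h_gt y (by linarith [hy.1])⟩

noncomputable def lossAverse (t : ℝ) : ℝ := min t (t / 2)

theorem lossAverse_of_nonpos {t : ℝ} (ht : t ≤ 0) : lossAverse t = t :=
  min_eq_left (by linarith)

theorem lossAverse_of_nonneg {t : ℝ} (ht : 0 ≤ t) : lossAverse t = t / 2 :=
  min_eq_right (by linarith)

theorem lossAverse_lipschitzWith : LipschitzWith 1 lossAverse := by
  refine LipschitzWith.of_dist_le_mul fun x y => ?_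
  have hhalf : |x / 2 - y / 2| ≤ |x - y| := by
    rw [← sub_div, abs_div, abs_two]
    linarith [abs_nonneg (x - y)]
  simpa [Real.dist_eq, lossAverse] using
    (abs_min_sub_min_le_max x (x / 2) y (y / 2)).trans (max_le le_rfl hhalf)

theorem lossAverse_strictMono : StrictMono lossAverse :=
  fun _ _ h => min_lt_min h (by linarith)

theorem lossAverse_isPiecewiseLinear : IsPiecewiseLinear lossAverse :=
  isPiecewiseLinear_of_affine_on_sides (c := 0) (a₁ := 1) (b₁ := 0) (a₂ := 1 / 2) (b₂ := 0)
    (fun t ht => by rw [lossAverse_of_nonpos ht.le]; ring)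
    (fun t ht => by rw [lossAverse_of_nonneg ht.le]; ring)

/-- The SDE aggregator `g(x, s)` of the paper. -/
noncomputable def refScore {α : Type*} {l : ℕ} (mu : ℝ → ℝ) (f : α → Fin l → ℝ) (s : Finset α)
    (x : α) : ℝ :=
  ∑ i, mu (f x i - (∑ z ∈ s, f z i) / s.card)

namespace DecoyExample

def a : Fin 2 → ℝ := ![4, 0]
def b : Fin 2 → ℝ := ![0, 5]
def c : Fin 2 → ℝ := ![0, -10]

theorem a_ne_b : a ≠ b := by simp [a, b, funext_iff, Fin.forall_fin_two]
theorem a_ne_c : a ≠ c := by simp [a, c, funext_iff, Fin.forall_fin_two]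
theorem b_ne_c : b ≠ c := by norm_num [b, c, funext_iff, Fin.forall_fin_two]

theorem refScore_pair (x : Fin 2 → ℝ) :
    refScore lossAverse id {a, b} x = lossAverse (x 0 - 2) + lossAverse (x 1 - 5 / 2) := by
  simp only [refScore, Finset.sum_pair a_ne_b, Finset.card_pair a_ne_b, Fin.sum_univ_two]
  norm_num [a, b]

theorem refScore_triple (x : Fin 2 → ℝ) :
    refScore lossAverse id {a, b, c} x = lossAverse (x 0 - 4 / 3) + lossAverse (x 1 + 5 / 3) := by
  have ha : a ∉ ({b, c} : Finset (Fin 2 → ℝ)) := by simp [a_ne_b, a_ne_c]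
  simp only [refScore, Finset.card_insert_of_notMem ha, Finset.card_pair b_ne_c,
    Finset.sum_insert ha, Finset.sum_pair b_ne_c, Fin.sum_univ_two]
  norm_num [a, b, c]

theorem b_isStrictArgmax_pair : ∀ x ∈ ({a, b} : Finset (Fin 2 → ℝ)), x ≠ b →
    refScore lossAverse id {a, b} x < refScore lossAverse id {a, b} b := by
  simp only [Finset.forall_mem_insert, Finset.mem_singleton, forall_eq, refScore_pair]
  norm_num [a, b, lossAverse_of_nonpos, lossAverse_of_nonneg]

theorem a_isStrictArgmax_triple : ∀ x ∈ ({a, b, c} : Finset (Fin 2 → ℝ)), x ≠ a →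
    refScore lossAverse id {a, b, c} x < refScore lossAverse id {a, b, c} a := by
  simp only [Finset.forall_mem_insert, Finset.mem_singleton, forall_eq, refScore_triple]
  norm_num [a, b, c, lossAverse_of_nonpos, lossAverse_of_nonneg]

theorem pair_ssubset_triple : ({a, b} : Finset (Fin 2 → ℝ)) ⊂ {a, b, c} :=
  (Finset.ssubset_iff_of_subset (by simp)).mpr ⟨c, by simp, by simp [a_ne_c.symm, b_ne_c.symm]⟩

end DecoyExample

open DecoyExample in
/-- the set-dependent-embeddings aggregation model with inductive bias,
`g(x, t) = ∑ i, μ(f_i(x) − r_i(t))` where `r(t)` is the coordinatewise mean of `f` over `t`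
and `μ` is a Lipschitz, strictly increasing, piecewise-linear nonlinearity, can violate IIA:
there are finite sets `s' ⊂ s` whose unique `g`-maximizers `y` and `y'` differ even though
`y ∈ s'`. -/
theorem stmt14 : ∃ (d l : ℕ) (f : (Fin d → ℝ) →ₗ[ℝ] (Fin l → ℝ)) (mu : ℝ → ℝ)
    (s s' : Finset (Fin d → ℝ)) (y y' : Fin d → ℝ),
    (∃ K : NNReal, LipschitzWith K mu) ∧ StrictMono mu ∧ IsPiecewiseLinear mu ∧
    s' ⊂ s ∧
    y ∈ s ∧
    (∀ x ∈ s, x ≠ y →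
      ∑ i, mu (f x i - (∑ z ∈ s, f z i) / s.card) <
        ∑ i, mu (f y i - (∑ z ∈ s, f z i) / s.card)) ∧
    y' ∈ s' ∧
    (∀ x ∈ s', x ≠ y' →
      ∑ i, mu (f x i - (∑ z ∈ s', f z i) / s'.card) <
        ∑ i, mu (f y' i - (∑ z ∈ s', f z i) / s'.card)) ∧
    y ∈ s' ∧ y' ≠ y :=
  ⟨2, 2, LinearMap.id, lossAverse, {a, b, c}, {a, b}, a, b, ⟨1, lossAverse_lipschitzWith⟩,
    lossAverse_strictMono, lossAverse_isPiecewiseLinear, pair_ssubset_triple,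
    by simp, a_isStrictArgmax_triple, by simp, b_isStrictArgmax_pair, by simp, a_ne_b.symm⟩
end
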